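/- Every prime ideal of A ⋈^f J is either of the form P ⋈^f J := {(p, f(p)+j) | p ∈ P, j ∈ J} for some prime ideal P of A, or of the form Q̄^f := {(a, f(a)+j) | a ∈ A, j ∈ J, f(a)+j ∈ Q} for some prime ideal Q of B not containing J. -/

import Mathlib

/-! The projection `A ⋈^f J → A` is surjective with kernel `0 × J`, so a prime containing the
kernel is the preimage of a prime of `A`. Otherwise some `t = (0, j)` lies outside `K`; as
`t · (A × B) ⊆ A ⋈^f J`, the two rings agree after inverting `t`, and `K` is the trace of the
prime `{s | s t ∈ K}` of `A × B`. That prime avoids `t`, so it is `A × Q` with `J ⊄ Q`. -/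

variable {A B : Type*} [CommRing A] [CommRing B]

/-- The amalgamation `A ⋈^f J = {(a, f a + j) | a ∈ A, j ∈ J}` as a subring of `A × B`. -/
def amalg (f : A →+* B) (J : Ideal B) : Subring (A × B) where
  carrier := {p : A × B | ∃ a : A, ∃ j ∈ J, p = (a, f a + j)}
  zero_mem' := ⟨0, 0, J.zero_mem, by simp [Prod.ext_iff]⟩
  one_mem' := ⟨1, 0, J.zero_mem, by simp [Prod.ext_iff]⟩
  add_mem' := by
    rintro _ _ ⟨a, j, hj, rfl⟩ ⟨a', j', hj', rfl⟩
    exact ⟨a + a', j + j', J.add_mem hj hj', by simp [Prod.ext_iff]; ring⟩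
  neg_mem' := by
    rintro _ ⟨a, j, hj, rfl⟩
    exact ⟨-a, -j, J.neg_mem hj, by simp [Prod.ext_iff]; ring⟩
  mul_mem' := by
    rintro _ _ ⟨a, j, hj, rfl⟩ ⟨a', j', hj', rfl⟩
    refine ⟨a * a', f a * j' + j * f a' + j * j', ?_, by simp [Prod.ext_iff]; ring⟩
    exact J.add_mem (J.add_mem (J.mul_mem_left _ hj') (J.mul_mem_right _ hj))
      (J.mul_mem_right _ hj)

/-- The subring `f(A) + J` of `B`. -/
def fAJ (f : A →+* B) (J : Ideal B) : Subring B where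
  carrier := {b : B | ∃ a : A, ∃ j ∈ J, b = f a + j}
  zero_mem' := ⟨0, 0, J.zero_mem, by simp⟩
  one_mem' := ⟨1, 0, J.zero_mem, by simp⟩
  add_mem' := by
    rintro _ _ ⟨a, j, hj, rfl⟩ ⟨a', j', hj', rfl⟩
    exact ⟨a + a', j + j', J.add_mem hj hj', by simp; ring⟩
  neg_mem' := by
    rintro _ ⟨a, j, hj, rfl⟩
    exact ⟨-a, -j, J.neg_mem hj, by simp; ring⟩
  mul_mem' := by
    rintro _ _ ⟨a, j, hj, rfl⟩ ⟨a', j', hj', rfl⟩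
    refine ⟨a * a', f a * j' + j * f a' + j * j', ?_, by simp; ring⟩
    exact J.add_mem (J.add_mem (J.mul_mem_left _ hj') (J.mul_mem_right _ hj))
      (J.mul_mem_right _ hj)

namespace Subring

variable {S : Type*} [CommRing S] {R : Subring S} {t : R}

theorem mk_mul_mk_eq_mk_mul_mul (ht : ∀ s : S, s * t ∈ R) (a b : S) :
    (⟨a * t, ht a⟩ : R) * ⟨b * t, ht b⟩ = ⟨a * b * t, ht (a * b)⟩ * t :=
  Subtype.ext (by push_cast; ring)

theorem exists_isPrime_comap_subtype_eq (ht : ∀ s : S, s * t ∈ R) (K : Ideal R) [K.IsPrime]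
    (htK : t ∉ K) : ∃ Q : Ideal S, Q.IsPrime ∧ (t : S) ∉ Q ∧ Q.comap R.subtype = K := by
  have hmem (r : R) : (⟨r * t, ht r⟩ : R) ∈ K ↔ r ∈ K := by
    rw [show (⟨r * t, ht r⟩ : R) = r * t from rfl, Ideal.IsPrime.mul_mem_right_iff htK]
  let Q : Ideal S :=
    { carrier := {s | ⟨s * t, ht s⟩ ∈ K}
      zero_mem' := by
        show (⟨0 * t, ht 0⟩ : R) ∈ K
        convert K.zero_mem using 1
        exact Subtype.ext (zero_mul _)
      add_mem' := fun {a b} ha hb => by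
        simpa [add_mul] using K.add_mem ha hb
      smul_mem' := fun c s hs => by
        have : (⟨c * s * t, ht (c * s)⟩ : R) * t ∈ K := by
          rw [← mk_mul_mk_eq_mk_mul_mul]
          exact K.mul_mem_left _ hs
        exact (Ideal.IsPrime.mul_mem_right_iff htK).1 this }
  refine ⟨Q, ⟨?_, fun {a b} hab => ?_⟩, ?_, ?_⟩
  · rw [Ne, Ideal.eq_top_iff_one]
    show (⟨1 * t, ht 1⟩ : R) ∉ K
    simpa using htK
  · have : (⟨a * t, ht a⟩ : R) * ⟨b * t, ht b⟩ ∈ K := by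
      rw [mk_mul_mk_eq_mk_mul_mul]
      exact K.mul_mem_right _ hab
    exact ‹K.IsPrime›.mem_or_mem this
  · show (⟨t * t, ht t⟩ : R) ∉ K
    rwa [hmem]
  · ext r
    exact hmem r

end Subring

section Amalgamation

variable {f : A →+* B} {J : Ideal B}

theorem mem_amalg_iff {x : A × B} : x ∈ amalg f J ↔ x.2 - f x.1 ∈ J := by
  constructor
  · rintro ⟨a, j, hj, rfl⟩
    simpa using hj
  · exact fun h => ⟨x.1, x.2 - f x.1, h, by simp⟩

theorem amalg_exists_fst_iff (x : amalg f J) (P : Ideal A) :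
    (∃ p ∈ P, ∃ j ∈ J, (x : A × B) = (p, f p + j)) ↔ (x : A × B).1 ∈ P := by
  constructor
  · rintro ⟨p, hp, j, -, hx⟩
    simpa [hx] using hp
  · exact fun hx => ⟨_, hx, _, mem_amalg_iff.1 x.2, by simp⟩

theorem amalg_exists_snd_iff (x : amalg f J) (Q : Ideal B) :
    (∃ a, ∃ j ∈ J, f a + j ∈ Q ∧ (x : A × B) = (a, f a + j)) ↔ (x : A × B).2 ∈ Q := by
  constructor
  · rintro ⟨a, j, -, hQ, hx⟩
    simpa [hx] using hQ
  · exact fun hx => ⟨(x : A × B).1, _, mem_amalg_iff.1 x.2, by simpa using hx, by simp⟩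

variable (f J) in
def amalgFst : amalg f J →+* A :=
  (RingHom.fst A B).comp (amalg f J).subtype

theorem amalgFst_surjective : Function.Surjective (amalgFst f J) :=
  fun a => ⟨⟨(a, f a), mem_amalg_iff.2 (by simp)⟩, rfl⟩

theorem mem_ker_amalgFst {x : amalg f J} : x ∈ RingHom.ker (amalgFst f J) ↔ (x : A × B).1 = 0 :=
  RingHom.mem_ker

theorem snd_mem_of_mem_ker_amalgFst {x : amalg f J} (hx : x ∈ RingHom.ker (amalgFst f J)) :
    (x : A × B).2 ∈ J := by
  simpa [mem_ker_amalgFst.1 hx] using mem_amalg_iff.1 x.2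

theorem mul_mem_amalg_of_mem_ker_amalgFst {x : amalg f J}
    (hx : x ∈ RingHom.ker (amalgFst f J)) (s : A × B) : s * x ∈ amalg f J :=
  mem_amalg_iff.2 <| by
    simpa [mem_ker_amalgFst.1 hx] using J.mul_mem_left s.2 (snd_mem_of_mem_ker_amalgFst hx)

theorem exists_isPrime_of_ker_amalgFst_le (K : Ideal (amalg f J)) [K.IsPrime]
    (hK : RingHom.ker (amalgFst f J) ≤ K) :
    ∃ P : Ideal A, P.IsPrime ∧
      (K : Set (amalg f J)) = {x : amalg f J | ∃ p ∈ P, ∃ j ∈ J, (x : A × B) = (p, f p + j)} := by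
  refine ⟨K.map (amalgFst f J), Ideal.map_isPrime_of_surjective amalgFst_surjective hK, ?_⟩
  have hcomap : (K.map (amalgFst f J)).comap (amalgFst f J) = K := by
    rw [Ideal.comap_map_of_surjective' (amalgFst f J) amalgFst_surjective, sup_eq_left.2 hK]
  ext x
  rw [SetLike.mem_coe, ← SetLike.ext_iff.1 hcomap x, Ideal.mem_comap]
  exact (amalg_exists_fst_iff x _).symm

theorem exists_isPrime_of_not_ker_amalgFst_le (K : Ideal (amalg f J)) [K.IsPrime]
    (hK : ¬ RingHom.ker (amalgFst f J) ≤ K) :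
    ∃ Q : Ideal B, Q.IsPrime ∧ ¬ J ≤ Q ∧
      (K : Set (amalg f J)) =
        {x : amalg f J | ∃ a, ∃ j ∈ J, f a + j ∈ Q ∧ (x : A × B) = (a, f a + j)} := by
  obtain ⟨t, ht, htK⟩ := SetLike.not_le_iff_exists.1 hK
  obtain ⟨Q, hQ, htQ, rfl⟩ :=
    Subring.exists_isPrime_comap_subtype_eq (mul_mem_amalg_of_mem_ker_amalgFst ht) K htK
  rcases (Ideal.ideal_prod_prime Q).1 hQ with ⟨P, -, rfl⟩ | ⟨Q, hQ', rfl⟩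
  · exact absurd ⟨by simp [mem_ker_amalgFst.1 ht], trivial⟩ htQ
  refine ⟨Q, hQ', fun hJQ => htQ ⟨trivial, hJQ (snd_mem_of_mem_ker_amalgFst ht)⟩, ?_⟩
  ext x
  exact (and_iff_right trivial).trans (amalg_exists_snd_iff x Q).symm

end Amalgamation

/-- Every prime ideal of `A ⋈^f J` is either of the form `P ⋈^f J` for a prime `P` of `A`, or of
the form `Q̄^f` for a prime `Q` of `B` not containing `J`. -/
theorem amalg_prime_classification (f : A →+* B) (J : Ideal B)
    (K : Ideal (amalg f J)) (hK : K.IsPrime) :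
    (∃ P : Ideal A, P.IsPrime ∧
      (K : Set (amalg f J)) = {x : amalg f J | ∃ p ∈ P, ∃ j ∈ J, (x : A × B) = (p, f p + j)}) ∨
    (∃ Q : Ideal B, Q.IsPrime ∧ ¬ J ≤ Q ∧
      (K : Set (amalg f J)) =
        {x : amalg f J | ∃ a : A, ∃ j ∈ J, f a + j ∈ Q ∧ (x : A × B) = (a, f a + j)}) := by
  have := hK
  by_cases hker : RingHom.ker (amalgFst f J) ≤ K
  · exact Or.inl (exists_isPrime_of_ker_amalgFst_le K hker)
  · exact Or.inr (exists_isPrime_of_not_ker_amalgFst_le K hker)
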